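/- arXiv:1302.4599 — 2 statements merged into one kernel-verified Lean document; each statement's English description precedes it below -/
import Mathlib

section
/- Let E ⊆ [0,∞) and τ̃ ∈ Ẽ₀ᵈ. Then E is τ̃-strongly porous at 0 if and only if C(τ̃) < ∞; and E is completely strongly porous at 0 if and only if C_E < ∞. -/
open Filter Topology Set
open scoped ENNReal

/-- A scaling sequence: strictly positive reals tending to zero. -/
def IsScaling (r : ℕ → ℝ) : Prop := (∀ n, 0 < r n) ∧ Tendsto r atTop (𝓝 0)

/-- A sequence of reals is almost decreasing if it is eventually nonincreasing. -/
def AlmostDecreasing (t : ℕ → ℝ) : Prop := ∀ᶠ n in atTop, t (n + 1) ≤ t n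

/-- `τ ∈ Ẽ₀ᵈ`: almost decreasing, values in `E \ {0}`, tending to `0`. -/
def MemE0d (E : Set ℝ) (t : ℕ → ℝ) : Prop :=
  AlmostDecreasing t ∧ (∀ n, t n ∈ E \ {0}) ∧ Tendsto t atTop (𝓝 0)

/-- `(a,b)` is a connected component of `Int(ℝ⁺ \ E)`: an open interval in `ℝ⁺`
missing `E` that is maximal (among such intervals) with this property. -/
def IsGapComponent (E : Set ℝ) (a b : ℝ) : Prop :=
  0 ≤ a ∧ a < b ∧ Ioo a b ∩ E = ∅ ∧
    ∀ a' b' : ℝ, 0 ≤ a' → a' ≤ a → b ≤ b' → Ioo a' b' ∩ E = ∅ → a' = a ∧ b' = b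

/-- `((aₙ,bₙ))ₙ ∈ Ĩ_Eᵈ`. -/
def MemIE (E : Set ℝ) (a b : ℕ → ℝ) : Prop :=
  (∀ n, IsGapComponent E (a n) (b n)) ∧ AlmostDecreasing a ∧
    Tendsto a atTop (𝓝 0) ∧ Tendsto (fun n => (b n - a n) / b n) atTop (𝓝 1)

/-- `x̃ ≍ ỹ`: there are `c₁, c₂ > 0` with `c₁ xₙ < yₙ < c₂ xₙ` for all `n`. -/
def Asymp (x y : ℕ → ℝ) : Prop :=
  ∃ c₁ c₂ : ℝ, 0 < c₁ ∧ 0 < c₂ ∧ ∀ n, c₁ * x n < y n ∧ y n < c₂ * x n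

/-- `E` is `τ̃`-strongly porous at `0`. -/
def TauStronglyPorous (E : Set ℝ) (t : ℕ → ℝ) : Prop :=
  ∃ a b : ℕ → ℝ, MemIE E a b ∧ Asymp t a

/-- `E` is completely strongly porous at `0`. -/
def CSP (E : Set ℝ) : Prop := ∀ t : ℕ → ℝ, MemE0d E t → TauStronglyPorous E t

/-- `L̃ = ((lₙ,mₙ)) ∈ Ĩ_Eᵈ` is universal. -/
def IsUniversal (E : Set ℝ) (l m : ℕ → ℝ) : Prop :=
  MemIE E l m ∧ ∀ a b : ℕ → ℝ, MemIE E a b →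
    ∃ (N₁ : ℕ) (f : ℕ → ℕ), ∀ n, N₁ ≤ n → a n = l (f n)

/-- `M(L̃) = limsupₙ lₙ/mₙ₊₁`, as an element of `[0,∞]`. -/
noncomputable def Mlim (l m : ℕ → ℝ) : ℝ≥0∞ :=
  limsup (fun n => ENNReal.ofReal (l n / m (n + 1))) atTop

/-- `C(τ̃) = inf{ limsupₙ aₙ/τₙ : ((aₙ,bₙ)) ∈ Ĩ_Eᵈ(τ̃) }` (inf ∅ = ∞). -/
noncomputable def Ctau (E : Set ℝ) (t : ℕ → ℝ) : ℝ≥0∞ :=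
  sInf {c : ℝ≥0∞ | ∃ a b : ℕ → ℝ, MemIE E a b ∧ (∀ᶠ n in atTop, t n ≤ a n) ∧
    c = limsup (fun n => ENNReal.ofReal (a n / t n)) atTop}

/-- `C_E = sup_{τ̃ ∈ Ẽ₀ᵈ} C(τ̃)`. -/
noncomputable def Ctot (E : Set ℝ) : ℝ≥0∞ :=
  ⨆ t ∈ {t : ℕ → ℝ | MemE0d E t}, Ctau E t

/-- A normal scaling sequence for the pointed metric space `(E, |·|, 0)`. -/
def IsNormalE (E : Set ℝ) (r : ℕ → ℝ) : Prop :=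
  IsScaling r ∧ ∃ s : ℕ → ℝ, (∀ n, s n ∈ E) ∧ AlmostDecreasing s ∧
    Tendsto (fun n => s n / r n) atTop (𝓝 1)

/-- `R*(Ω₀ᴱ(n))`: the sup of all limits `limₙ sₙ/rₙ` over normal scaling sequences `r`
for `(E,|·|,0)` and sequences `s` in `E` for which the finite limit exists (sup ∅ = 0). -/
noncomputable def RstarE (E : Set ℝ) : ℝ≥0∞ :=
  sSup {c : ℝ≥0∞ | ∃ (r s : ℕ → ℝ) (L : ℝ), IsNormalE E r ∧ (∀ n, s n ∈ E) ∧
    Tendsto (fun n => s n / r n) atTop (𝓝 L) ∧ c = ENNReal.ofReal L}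

/-- `x̃` and `ỹ` are mutually stable w.r.t. `r̃`. -/
def MutuallyStable {X : Type*} [MetricSpace X] (r : ℕ → ℝ) (x y : ℕ → X) : Prop :=
  ∃ L : ℝ, Tendsto (fun n => dist (x n) (y n) / r n) atTop (𝓝 L)

/-- A family of sequences is self-stable w.r.t. `r̃`. -/
def SelfStable {X : Type*} [MetricSpace X] (r : ℕ → ℝ) (F : Set (ℕ → X)) : Prop :=
  ∀ x ∈ F, ∀ y ∈ F, MutuallyStable r x y

/-- A maximal self-stable family w.r.t. `r̃`. -/
def MaximalSelfStable {X : Type*} [MetricSpace X] (r : ℕ → ℝ) (F : Set (ℕ → X)) : Prop :=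
  SelfStable r F ∧ ∀ z : ℕ → X, z ∈ F ∨ ∃ x ∈ F, ¬ MutuallyStable r x z

/-- A normal scaling sequence for the pointed metric space `(X,d,p)`. -/
def IsNormalX {X : Type*} [MetricSpace X] (p : X) (r : ℕ → ℝ) : Prop :=
  IsScaling r ∧ ∃ x : ℕ → X, AlmostDecreasing (fun n => dist (x n) p) ∧
    Tendsto (fun n => dist (x n) p / r n) atTop (𝓝 1)

/-- `R*(Ω_pˣ(n))`: the sup of all limits `limₙ d(xₙ,p)/rₙ` over normal scaling
sequences `r̃` and sequences `x̃` in `X` for which the finite limit exists (sup ∅ = 0). -/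
noncomputable def RstarX {X : Type*} [MetricSpace X] (p : X) : ℝ≥0∞ :=
  sSup {c : ℝ≥0∞ | ∃ (r : ℕ → ℝ) (x : ℕ → X) (L : ℝ), IsNormalX p r ∧
    Tendsto (fun n => dist (x n) p / r n) atTop (𝓝 L) ∧ c = ENNReal.ofReal L}

/-- `R₊(Ω_pˣ(n))`: the inf of the strictly positive such limits (inf ∅ = ∞). -/
noncomputable def RlowX {X : Type*} [MetricSpace X] (p : X) : ℝ≥0∞ :=
  sInf {c : ℝ≥0∞ | ∃ (r : ℕ → ℝ) (x : ℕ → X) (L : ℝ), IsNormalX p r ∧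
    Tendsto (fun n => dist (x n) p / r n) atTop (𝓝 L) ∧ 0 < L ∧ c = ENNReal.ofReal L}

/-!
If `((aₙ,bₙ)) ∈ Ĩ_Eᵈ` and `c₁ τₙ < aₙ < c₂ τₙ`, then `aₙ/bₙ → 0` forces `τₙ < bₙ`, hence
`τₙ ≤ aₙ` since `τₙ ∈ E`, and `C(τ̃) ≤ c₂`. Conversely, a sequence of gaps realising
`C(τ̃) < ∞` is comparable with `τ̃` once its first terms are replaced.

If `C_E = ∞`, choose `τ̃ᵏ ∈ Ẽ₀ᵈ` with `C(τ̃ᵏ) > k`. After cutting off their heads, all the terms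
of all the `τ̃ᵏ` can be listed as a single decreasing sequence `τ̃ ∈ Ẽ₀ᵈ`. Read along the
positions of `τ̃ᵏ`, a porosity witness for `τ̃` with upper constant `c₂` gives `C(τ̃ᵏ) ≤ c₂` for
every `k`, which is absurd.
-/

lemma MemE0d.pos {E : Set ℝ} (hE : E ⊆ Ici 0) {t : ℕ → ℝ} (ht : MemE0d E t) (n : ℕ) :
    0 < t n :=
  (hE (ht.2.1 n).1).lt_of_ne' (ht.2.1 n).2

section GapComponent

variable {E : Set ℝ} {a b a' b' x : ℝ}

lemma IsGapComponent.le_left_of_mem (h : IsGapComponent E a b) (hx : x ∈ E) (hxb : x < b) :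
    x ≤ a := by
  by_contra! hax
  have hx' : x ∈ Ioo a b ∩ E := ⟨⟨hax, hxb⟩, hx⟩
  rwa [h.2.2.1] at hx'

lemma IsGapComponent.right_le_of_lt (h : IsGapComponent E a b) (h' : IsGapComponent E a' b')
    (ha : a < a') : b ≤ a' := by
  by_contra! hab
  have hunion : Ioo a (max b b') ∩ E = ∅ := by
    rw [← min_eq_left ha.le, ← Ioo_union_Ioo' hab (ha.trans h'.2.1), union_inter_distrib_right,
      h.2.2.1, h'.2.2.1, union_empty]
  have hb' : b' ≤ b := max_eq_left_iff.mp (h.2.2.2 a _ h.1 le_rfl (le_max_left _ _) hunion).2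
  exact ha.ne (h'.2.2.2 a b h.1 ha.le hb' h.2.2.1).1

end GapComponent

lemma tendsto_div_of_tendsto_sub_div {α β : ℕ → ℝ} (hβ : ∀ n, β n ≠ 0)
    (h : Tendsto (fun n => (β n - α n) / β n) atTop (𝓝 1)) :
    Tendsto (fun n => α n / β n) atTop (𝓝 0) := by
  have h' := (tendsto_const_nhds (x := (1 : ℝ))).sub h
  rw [sub_self] at h'
  refine h'.congr fun n => ?_
  field_simp [hβ n]
  ring

lemma Asymp.of_eventually_le {x y : ℕ → ℝ} {C₁ C₂ : ℝ} (hx : ∀ n, 0 < x n) (hy : ∀ n, 0 < y n)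
    (h₁ : ∀ᶠ n in atTop, x n ≤ C₁ * y n) (h₂ : ∀ᶠ n in atTop, y n ≤ C₂ * x n) : Asymp x y := by
  have bdd : ∀ {u v : ℕ → ℝ} {C : ℝ}, (∀ n, 0 < v n) → (∀ᶠ n in atTop, u n ≤ C * v n) →
      ∃ M, ∀ n, u n / v n ≤ M := fun {u v C} hv h => by
    refine (IsBoundedUnder.bddAbove_range_of_cofinite ?_).imp fun M hM n => hM ⟨n, rfl⟩
    rw [Nat.cofinite_eq_atTop]
    exact isBoundedUnder_of_eventually_le (h.mono fun n hn => (div_le_iff₀ (hv n)).mpr hn)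
  obtain ⟨M₁, hM₁⟩ := bdd hy h₁
  obtain ⟨M₂, hM₂⟩ := bdd hx h₂
  have hM₁0 : 0 < M₁ + 1 := by linarith [hM₁ 0, div_pos (hx 0) (hy 0)]
  refine ⟨(M₁ + 1)⁻¹, M₂ + 1, inv_pos.mpr hM₁0, by linarith [hM₂ 0, div_pos (hy 0) (hx 0)],
    fun n => ⟨?_, ?_⟩⟩
  · rw [inv_mul_lt_iff₀ hM₁0, ← div_lt_iff₀ (hy n)]
    linarith [hM₁ n]
  · rw [← div_lt_iff₀ (hx n)]
    linarith [hM₂ n]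

lemma MemIE.comp_max {E : Set ℝ} {a b : ℕ → ℝ} (h : MemIE E a b) (N : ℕ) :
    MemIE E (fun n => a (max n N)) (fun n => b (max n N)) := by
  have hmax : Tendsto (fun n => max n N) atTop atTop :=
    tendsto_atTop_mono (le_max_left · N) tendsto_id
  refine ⟨fun n => h.1 _, ?_, h.2.2.1.comp hmax, h.2.2.2.comp hmax⟩
  filter_upwards [h.2.1, eventually_ge_atTop N] with n hn hNn
  simpa only [max_eq_left hNn, max_eq_left (hNn.trans n.le_succ)] using hn

lemma eventually_le_of_gap_bounds {E : Set ℝ} {t α β : ℕ → ℝ} {c₁ : ℝ}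
    (hgap : ∀ n, IsGapComponent E (α n) (β n))
    (hrat : Tendsto (fun n => (β n - α n) / β n) atTop (𝓝 1))
    (hlow : ∀ᶠ n in atTop, c₁ * t n < α n) (ht : ∀ n, t n ∈ E) (hc₁ : 0 < c₁) :
    ∀ᶠ n in atTop, t n ≤ α n := by
  have hβ n : 0 < β n := (hgap n).1.trans_lt (hgap n).2.1
  filter_upwards [hlow,
    (tendsto_div_of_tendsto_sub_div (fun n => (hβ n).ne') hrat).eventually_lt_const hc₁]
    with n hn hαβ
  rw [div_lt_iff₀ (hβ n)] at hαβ
  exact (hgap n).le_left_of_mem (ht n) (by nlinarith)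

lemma almostDecreasing_of_gap_bounds {E : Set ℝ} {t α β : ℕ → ℝ} {c₁ c₂ : ℝ}
    (hgap : ∀ n, IsGapComponent E (α n) (β n))
    (hrat : Tendsto (fun n => (β n - α n) / β n) atTop (𝓝 1))
    (hbd : ∀ᶠ n in atTop, c₁ * t n < α n ∧ α n < c₂ * t n) (ht : AlmostDecreasing t)
    (hc₁ : 0 < c₁) (hc₂ : 0 < c₂) : AlmostDecreasing α := by
  have hβ n : 0 < β n := (hgap n).1.trans_lt (hgap n).2.1
  filter_upwards [hbd, (tendsto_add_atTop_nat 1).eventually hbd, ht,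
    (tendsto_div_of_tendsto_sub_div (fun n => (hβ n).ne') hrat).eventually_lt_const
      (div_pos hc₁ hc₂)] with n hn hn₁ htn hαβ
  rw [div_lt_div_iff₀ (hβ n) hc₂] at hαβ
  by_contra! hlt
  -- the next gap starts beyond `β n`, which forces `α n / β n ≥ c₁ / c₂`
  have hβα : β n ≤ α (n + 1) := (hgap n).right_le_of_lt (hgap (n + 1)) hlt
  have hβt : β n < c₂ * t n := by nlinarith [hn₁.2]
  nlinarith [mul_lt_mul_of_pos_left hβt hc₁, mul_lt_mul_of_pos_left hn.1 hc₂]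

lemma ctau_le_of_gap_bounds {E : Set ℝ} {t α β : ℕ → ℝ} {c₁ c₂ : ℝ} (ht : MemE0d E t)
    (hgap : ∀ n, IsGapComponent E (α n) (β n))
    (hrat : Tendsto (fun n => (β n - α n) / β n) atTop (𝓝 1))
    (hbd : ∀ᶠ n in atTop, c₁ * t n < α n ∧ α n < c₂ * t n) (hc₁ : 0 < c₁) (hc₂ : 0 < c₂) :
    Ctau E t ≤ ENNReal.ofReal c₂ := by
  have hα : Tendsto α atTop (𝓝 0) := by
    refine squeeze_zero' (Eventually.of_forall fun n => (hgap n).1)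
      (hbd.mono fun n hn => hn.2.le) ?_
    simpa using ht.2.2.const_mul c₂
  have hmem : MemIE E α β :=
    ⟨hgap, almostDecreasing_of_gap_bounds hgap hrat hbd ht.1 hc₁ hc₂, hα, hrat⟩
  have hratio : ∀ᶠ n in atTop, ENNReal.ofReal (α n / t n) ≤ ENNReal.ofReal c₂ := by
    filter_upwards [hbd] with n hn
    have htn : 0 < t n := pos_of_mul_pos_right ((hgap n).1.trans_lt hn.2) hc₂.le
    exact ENNReal.ofReal_le_ofReal ((div_le_iff₀ htn).mpr hn.2.le)
  calc Ctau E t ≤ limsup (fun n => ENNReal.ofReal (α n / t n)) atTop :=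
        sInf_le ⟨α, β, hmem, eventually_le_of_gap_bounds hgap hrat (hbd.mono fun n hn => hn.1)
          (fun n => (ht.2.1 n).1) hc₁, rfl⟩
    _ ≤ ENNReal.ofReal c₂ := limsup_le_of_le (by isBoundedDefault) hratio

lemma ctau_lt_top_of_tauStronglyPorous {E : Set ℝ} {t : ℕ → ℝ} (ht : MemE0d E t)
    (h : TauStronglyPorous E t) : Ctau E t < ⊤ := by
  obtain ⟨a, b, hmem, c₁, c₂, hc₁, hc₂, hbd⟩ := h
  exact (ctau_le_of_gap_bounds ht hmem.1 hmem.2.2.2 (Eventually.of_forall hbd) hc₁ hc₂).trans_lt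
    ENNReal.ofReal_lt_top

lemma tauStronglyPorous_of_ctau_lt_top {E : Set ℝ} (hE : E ⊆ Ici 0) {t : ℕ → ℝ}
    (ht : MemE0d E t) (h : Ctau E t < ⊤) : TauStronglyPorous E t := by
  obtain ⟨-, ⟨a, b, hmem, hta, rfl⟩, hlim⟩ := sInf_lt_iff.mp h
  obtain ⟨C, -, hC, -⟩ := ENNReal.lt_iff_exists_real_btwn.mp hlim
  obtain ⟨N, hN⟩ := eventually_atTop.mp (hta.and (eventually_lt_of_limsup_lt hC))
  have hbd n : t (max n N) ≤ a (max n N) ∧ a (max n N) < C * t (max n N) := by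
    obtain ⟨hle, hlt⟩ := hN (max n N) (le_max_right n N)
    exact ⟨hle, (div_lt_iff₀ (ht.pos hE _)).mp (ENNReal.ofReal_lt_ofReal_iff'.mp hlt).1⟩
  -- repeating the `N`-th gap in front makes the comparison hold for every `n`
  refine ⟨_, _, hmem.comp_max N, Asymp.of_eventually_le (ht.pos hE)
    (fun n => (ht.pos hE _).trans_le (hbd n).1) (C₁ := 1) (C₂ := C) ?_ ?_⟩ <;>
  filter_upwards [eventually_ge_atTop N] with n hn
  · simpa [max_eq_left hn] using (hbd n).1
  · simpa [max_eq_left hn] using (hbd n).2.le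

lemma tauStronglyPorous_iff_ctau_lt_top {E : Set ℝ} (hE : E ⊆ Ici 0) {t : ℕ → ℝ}
    (ht : MemE0d E t) : TauStronglyPorous E t ↔ Ctau E t < ⊤ :=
  ⟨ctau_lt_top_of_tauStronglyPorous ht, tauStronglyPorous_of_ctau_lt_top hE ht⟩

lemma exists_equiv_antitone_comp {α : Type*} [LinearOrder α] (g : ℕ → α)
    (hg : ∀ i, {j | g i ≤ g j}.Finite) : ∃ π : ℕ ≃ ℕ, Antitone (g ∘ π) := by
  have key (S : Finset ℕ) : ∃ i ∉ S, ∀ j ∉ S, g j ≤ g i := by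
    obtain ⟨j₀, hj₀⟩ := Infinite.exists_notMem_finset S
    obtain ⟨i, hi, hmax⟩ := exists_max_image {j | j ∉ S ∧ g j₀ ≤ g j} g
      ((hg j₀).subset fun j hj => hj.2) ⟨j₀, hj₀, le_rfl⟩
    refine ⟨i, hi.1, fun j hj => ?_⟩
    rcases le_total (g j₀) (g j) with h | h
    · exact hmax j ⟨hj, h⟩
    · exact h.trans hi.2
  choose pick hpick_notMem hpick_max using key
  -- greedy enumeration: `π m` maximises `g` off the indices `π 0, …, π (m - 1)`
  let S : ℕ → Finset ℕ := fun m => Nat.rec ∅ (fun _ T => insert (pick T) T) m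
  let π m := pick (S m)
  have hS m : S m = (Finset.range m).image π := by
    induction m with
    | zero => rfl
    | succ m ih => rw [Finset.range_add_one, Finset.image_insert, ← ih]
  have hne {j m} (h : j < m) : π j ≠ π m := fun he => hpick_notMem (S m) <| show π m ∈ S m by
    rw [← he, hS]
    exact Finset.mem_image_of_mem π (Finset.mem_range.mpr h)
  have hinj : Function.Injective π := fun m m' he => by
    by_contra hmm
    rcases Nat.lt_or_gt_of_ne hmm with h | h
    exacts [hne h he, hne h he.symm]
  have hanti : Antitone (g ∘ π) := antitone_nat_of_succ_le fun m =>
    hpick_max (S m) (π (m + 1)) <| by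
      simpa [hS] using fun j (hj : j < m) => hne (hj.trans m.lt_add_one)
  have hsurj : Function.Surjective π := fun i => by
    by_contra! hi
    have hle m : g i ≤ g (π m) := hpick_max (S m) i <| by simpa [hS] using fun j _ => hi j
    exact infinite_range_of_injective hinj ((hg i).subset (range_subset_iff.mpr hle))
  exact ⟨Equiv.ofBijective π ⟨hinj, hsurj⟩, hanti⟩

lemma tendsto_uncurry_cofinite_of_forall_abs_le {f : ℕ → ℕ → ℝ} {u : ℕ → ℝ}
    (hf : ∀ k, Tendsto (f k) atTop (𝓝 0)) (hu : Tendsto u atTop (𝓝 0))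
    (hfu : ∀ k n, |f k n| ≤ u k) : Tendsto (Function.uncurry f) cofinite (𝓝 0) := by
  refine Metric.tendsto_nhds.mpr fun ε hε => eventually_cofinite.mpr ?_
  obtain ⟨K, hK⟩ := eventually_atTop.mp (hu.eventually_lt_const hε)
  have hrow k : {n | ¬ dist (f k n) 0 < ε}.Finite := by
    rw [← eventually_cofinite, Nat.cofinite_eq_atTop]
    exact Metric.tendsto_nhds.mp (hf k) ε hε
  refine ((finite_Iio K).biUnion fun k _ => (finite_singleton k).prod (hrow k)).subset ?_
  rintro ⟨k, n⟩ hkn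
  refine mem_biUnion (x := k) ?_ ⟨rfl, hkn⟩
  by_contra hk
  rw [mem_ofPred_eq, Function.uncurry_apply_pair, Real.dist_0_eq_abs] at hkn
  exact hkn ((hfu k n).trans_lt (hK k (not_lt.mp hk)))

lemma exists_memE0d_forall_eventually_comp_eq {E : Set ℝ} (hE : E ⊆ Ici 0)
    {T : ℕ → ℕ → ℝ} (hT : ∀ k, MemE0d E (T k)) :
    ∃ τ : ℕ → ℝ, MemE0d E τ ∧ ∃ idx : ℕ → ℕ → ℕ,
      ∀ k, Tendsto (idx k) atTop atTop ∧ ∀ᶠ n in atTop, τ (idx k n) = T k n := by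
  -- cutting each `T k` below `1 / (k + 1)` makes the merged family tend to `0` along `cofinite`
  choose N hN using fun k =>
    eventually_atTop.mp ((hT k).2.2.eventually_lt_const (by positivity : (0 : ℝ) < 1 / (k + 1)))
  let e : ℕ ≃ ℕ × ℕ := (Denumerable.eqv (ℕ × ℕ)).symm
  let g : ℕ → ℝ := fun i => T (e i).1 ((e i).2 + N (e i).1)
  have hg : Tendsto g cofinite (𝓝 0) := by
    refine (tendsto_uncurry_cofinite_of_forall_abs_le (u := fun k : ℕ => 1 / ((k : ℝ) + 1))
      (fun k => (hT k).2.2.comp (tendsto_add_atTop_nat (N k)))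
      tendsto_one_div_add_atTop_nhds_zero_nat fun k n => ?_).comp e.injective.tendsto_cofinite
    rw [Function.comp_apply, abs_of_pos ((hT k).pos hE _)]
    exact (hN k _ (Nat.le_add_left _ _)).le
  obtain ⟨π, hπ⟩ := exists_equiv_antitone_comp g fun i => by
    simpa using eventually_cofinite.mp (hg.eventually_lt_const ((hT _).pos hE _))
  refine ⟨g ∘ π, ⟨Eventually.of_forall fun m => hπ m.le_succ, fun m => (hT _).2.1 _, ?_⟩,
    fun k n => π.symm (e.symm (k, n - N k)), fun k => ⟨?_, ?_⟩⟩
  · rw [← Nat.cofinite_eq_atTop]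
    exact hg.comp π.injective.tendsto_cofinite
  · have hinj := π.symm.injective.comp (e.symm.injective.comp (Prod.mk_right_injective k))
    rw [← Nat.cofinite_eq_atTop]
    exact hinj.tendsto_cofinite.comp (Nat.cofinite_eq_atTop ▸ tendsto_sub_atTop_nat (N k))
  · filter_upwards [eventually_ge_atTop (N k)] with n hn
    simp [g, Nat.sub_add_cancel hn]

lemma ctot_lt_top_of_csp {E : Set ℝ} (hE : E ⊆ Ici 0) (h : CSP E) : Ctot E < ⊤ := by
  by_contra! htop
  have hlarge (k : ℕ) : ∃ t, MemE0d E t ∧ (k : ℝ≥0∞) < Ctau E t :=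
    lt_biSup_iff.mp ((ENNReal.natCast_lt_top k).trans_le htop)
  choose T hT hTk using hlarge
  obtain ⟨τ, hτ, idx, hidx⟩ := exists_memE0d_forall_eventually_comp_eq hE hT
  obtain ⟨a, b, hab, c₁, c₂, hc₁, hc₂, hbd⟩ := h τ hτ
  obtain ⟨k, hk⟩ := exists_nat_gt c₂
  have hle : Ctau E (T k) ≤ ENNReal.ofReal c₂ := by
    refine ctau_le_of_gap_bounds (hT k) (fun n => hab.1 _) (hab.2.2.2.comp (hidx k).1) ?_ hc₁ hc₂
    filter_upwards [(hidx k).2] with n hn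
    simpa only [hn] using hbd (idx k n)
  exact (hTk k).not_ge (hle.trans (by simpa using ENNReal.ofReal_le_ofReal hk.le))

lemma csp_iff_ctot_lt_top {E : Set ℝ} (hE : E ⊆ Ici 0) : CSP E ↔ Ctot E < ⊤ :=
  ⟨ctot_lt_top_of_csp hE, fun h _ ht =>
    tauStronglyPorous_of_ctau_lt_top hE ht ((le_biSup (Ctau E) ht).trans_lt h)⟩

/-- Proposition 2.10. -/
theorem stmt18 (E : Set ℝ) (hE : E ⊆ Ici 0) (τ : ℕ → ℝ) (hτ : MemE0d E τ) :
    (TauStronglyPorous E τ ↔ Ctau E τ < ⊤) ∧ (CSP E ↔ Ctot E < ⊤) :=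
  ⟨tauStronglyPorous_iff_ctau_lt_top hE hτ, csp_iff_ctot_lt_top hE⟩
end

section
/- Let E ⊆ [0,∞) be completely strongly porous at 0. If L̃ ∈ Ĩ_Eᵈ is universal, then M(L̃) = C_E. -/
open Filter Topology Set
open scoped ENNReal

/-!
Write `L̃ = ((lₙ, mₙ))`. If `E` has no points in some `(0, ε)`, then `lₙ = 0` eventually, so
`M(L̃) = 0`. Otherwise every `lₙ` is positive and `mₙ → 0`.

For `τ̃ ∈ Ẽ₀ᵈ`, let `g n` be the last index `k` with `τₙ ≤ lₖ`. Then `((l_{g n}, m_{g n}))`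
lies in `Ĩ_Eᵈ(τ̃)`, and `m_{g n + 1} ≤ τₙ` because `τₙ ∈ E` lies to the right of the gap
`(l_{g n + 1}, m_{g n + 1})`. Hence `C(τ̃) ≤ limsup l_{g n}/m_{g n + 1} ≤ M(L̃)`.

Conversely, choose `τ̃ ∈ Ẽ₀ᵈ` with `m_{n+1} ≤ τₙ` and `τₙ / m_{n+1} → 1`, which is possible
because every `m_{n+1}` is a limit from the right of points of `E`. If `((aₙ, bₙ)) ∈ Ĩ_Eᵈ(τ̃)`,
universality gives `aₙ = l_{f n}` with `l_{n+1} < m_{n+1} ≤ τₙ ≤ l_{f n}`, which forces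
`lₙ ≤ aₙ` for large `n`. So `lₙ / m_{n+1} ≤ (aₙ / τₙ) (τₙ / m_{n+1})`, and `M(L̃) ≤ C(τ̃)`.
-/

lemma AlmostDecreasing.exists_antitoneOn {t : ℕ → ℝ} (h : AlmostDecreasing t) :
    ∃ N, AntitoneOn t (Ici N) := by
  obtain ⟨N, hN⟩ := eventually_atTop.1 h
  exact ⟨N, antitoneOn_nat_Ici_of_succ_le hN⟩

lemma AlmostDecreasing.eventually_le_of_succ_lt {l : ℕ → ℝ} (hdec : AlmostDecreasing l)
    (hpos : ∀ n, 0 < l n) (h0 : Tendsto l atTop (𝓝 0)) :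
    ∀ᶠ n in atTop, ∀ k, l (n + 1) < l k → l n ≤ l k := by
  obtain ⟨N, hN⟩ := hdec.exists_antitoneOn
  have hsmall : ∀ᶠ n in atTop, ∀ k ∈ Iio N, l n < l k :=
    (finite_Iio N).eventually_all.2 fun k _ => h0.eventually_lt_const (hpos k)
  filter_upwards [hsmall, eventually_ge_atTop N] with n hn hNn k hk
  rcases lt_or_ge k N with hkN | hkN
  · exact (hn k hkN).le
  rcases le_or_gt k n with hkn | hnk
  · exact hN hkN hNn hkn
  · exact absurd hk (not_lt.2 (hN (mem_Ici.2 (hNn.trans n.le_succ)) hkN hnk))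

namespace IsGapComponent

variable {E : Set ℝ} {a b : ℝ}

lemma right_pos (h : IsGapComponent E a b) : 0 < b :=
  h.1.trans_lt h.2.1

lemma right_le_of_mem (h : IsGapComponent E a b) {e : ℝ} (he : e ∈ E) (hae : a < e) : b ≤ e :=
  not_lt.1 fun heb => eq_empty_iff_forall_notMem.1 h.2.2.1 e ⟨⟨hae, heb⟩, he⟩

lemma right_mono {a' b' : ℝ} (h : IsGapComponent E a b) (h' : IsGapComponent E a' b')
    (ha : a' ≤ a) : b' ≤ b :=
  not_lt.1 fun hb => hb.ne' (h.2.2.2 a' b' h'.1 ha hb.le h'.2.2.1).2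

lemma exists_mem_near_right (h : IsGapComponent E a b) {ε : ℝ} (hε : 0 < ε) :
    ∃ e ∈ E, b ≤ e ∧ e < b + ε := by
  by_contra! hfar
  have hfree : Ioo a (b + ε) ∩ E = ∅ := by
    refine eq_empty_iff_forall_notMem.2 fun x ⟨⟨hax, hxb⟩, hxE⟩ => ?_
    rcases lt_or_ge x b with hx | hx
    · exact eq_empty_iff_forall_notMem.1 h.2.2.1 x ⟨⟨hax, hx⟩, hxE⟩
    · exact (hfar x hxE hx).not_gt hxb
  linarith [(h.2.2.2 a (b + ε) h.1 le_rfl (by linarith) hfree).2]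

lemma exists_mem_near_left (h : IsGapComponent E a b) {ε : ℝ} (hε : 0 < ε) (hεa : ε ≤ a) :
    ∃ e ∈ E, a - ε < e ∧ e ≤ a := by
  by_contra! hfar
  have hfree : Ioo (a - ε) b ∩ E = ∅ := by
    refine eq_empty_iff_forall_notMem.2 fun x ⟨⟨hax, hxb⟩, hxE⟩ => ?_
    rcases le_or_gt x a with hx | hx
    · exact (hfar x hxE hax).not_ge hx
    · exact eq_empty_iff_forall_notMem.1 h.2.2.1 x ⟨⟨hx, hxb⟩, hxE⟩
  linarith [(h.2.2.2 (a - ε) b (by linarith) (by linarith) le_rfl hfree).1]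

lemma left_pos (h : IsGapComponent E a b) (hE0 : ∀ ε > 0, (E ∩ Ioo 0 ε).Nonempty) : 0 < a := by
  refine h.1.lt_of_ne' fun ha => ?_
  obtain ⟨e, he, he0, heb⟩ := hE0 b h.right_pos
  exact eq_empty_iff_forall_notMem.1 h.2.2.1 e ⟨⟨ha ▸ he0, heb⟩, he⟩

end IsGapComponent

namespace MemIE

variable {E : Set ℝ} {a b : ℕ → ℝ}

lemma almostDecreasing_right (h : MemIE E a b) : AlmostDecreasing b :=
  h.2.1.mono fun n hn => (h.1 n).right_mono (h.1 (n + 1)) hn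

lemma tendsto_right (h : MemIE E a b) (hE0 : ∀ ε > 0, (E ∩ Ioo 0 ε).Nonempty) :
    Tendsto b atTop (𝓝 0) := by
  refine tendsto_order.2 ⟨fun c hc => Eventually.of_forall fun n => hc.trans (h.1 n).right_pos,
    fun ε hε => ?_⟩
  obtain ⟨e, he, he0, heε⟩ := hE0 ε hε
  filter_upwards [h.2.2.1.eventually_lt_const he0] with n hn
  exact ((h.1 n).right_le_of_mem he hn).trans_lt heε

lemma eventually_left_eq_zero (h : MemIE E a b) {ε : ℝ} (hε : 0 < ε)
    (hEε : E ∩ Ioo 0 ε = ∅) : ∀ᶠ n in atTop, a n = 0 := by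
  filter_upwards [h.2.2.1.eventually_lt_const hε] with n hn
  by_contra hne
  have hpos : 0 < a n := (h.1 n).1.lt_of_ne' hne
  obtain ⟨e, he, hae, hea⟩ := (h.1 n).exists_mem_near_left (half_pos hpos) (half_le_self hpos.le)
  exact eq_empty_iff_forall_notMem.1 hEε e ⟨he, by linarith, by linarith⟩

lemma comp (h : MemIE E a b) {g : ℕ → ℕ} (hg : Tendsto g atTop atTop)
    (hmono : ∀ᶠ n in atTop, g n ≤ g (n + 1)) : MemIE E (a ∘ g) (b ∘ g) := by
  obtain ⟨N, hN⟩ := h.2.1.exists_antitoneOn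
  refine ⟨fun n => h.1 (g n), ?_, h.2.2.1.comp hg, h.2.2.2.comp hg⟩
  filter_upwards [hmono, hg.eventually (eventually_ge_atTop N)] with n hn hgN
  exact hN (mem_Ici.2 hgN) (mem_Ici.2 (hgN.trans hn)) hn

end MemIE

/-- The last index `k` with `x ≤ l k`. Since `sSup` of an empty or unbounded set of naturals
is `0`, this reading needs `l → 0`, `0 < x` and some such `k`. -/
noncomputable def lastIndexGe (l : ℕ → ℝ) (x : ℝ) : ℕ := sSup {k | x ≤ l k}

section lastIndexGe

variable {l : ℕ → ℝ} {x : ℝ}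

lemma bddAbove_setOf_le_apply (h0 : Tendsto l atTop (𝓝 0)) (hx : 0 < x) :
    BddAbove {k | x ≤ l k} := by
  obtain ⟨N, hN⟩ := eventually_atTop.1 (h0.eventually_lt_const hx)
  exact ⟨N, fun k hk => not_lt.1 fun hNk => (hN k hNk.le).not_ge hk⟩

lemma le_lastIndexGe (h0 : Tendsto l atTop (𝓝 0)) (hx : 0 < x) {k : ℕ} (hk : x ≤ l k) :
    k ≤ lastIndexGe l x :=
  le_csSup (bddAbove_setOf_le_apply h0 hx) hk

lemma le_apply_lastIndexGe (h0 : Tendsto l atTop (𝓝 0)) (hx : 0 < x) {k : ℕ} (hk : x ≤ l k) :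
    x ≤ l (lastIndexGe l x) :=
  Nat.sSup_mem ⟨k, hk⟩ (bddAbove_setOf_le_apply h0 hx)

lemma apply_lastIndexGe_succ_lt (h0 : Tendsto l atTop (𝓝 0)) (hx : 0 < x) :
    l (lastIndexGe l x + 1) < x :=
  not_le.1 fun h => (le_lastIndexGe h0 hx h).not_gt (Nat.lt_succ_self _)

lemma lastIndexGe_anti (h0 : Tendsto l atTop (𝓝 0)) {y : ℝ} (hy : 0 < y) (hyx : y ≤ x) :
    lastIndexGe l x ≤ lastIndexGe l y :=
  csSup_le_csSup' (bddAbove_setOf_le_apply h0 hy) fun _ hk => hyx.trans hk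

end lastIndexGe

lemma Ctau_le_Mlim {E : Set ℝ} (hE : E ⊆ Ici 0) {l m t : ℕ → ℝ} (hlm : MemIE E l m)
    (ht : MemE0d E t) : Ctau E t ≤ Mlim l m := by
  obtain ⟨htdec, htmem, ht0⟩ := ht
  have htpos : ∀ n, 0 < t n := fun n => (hE (htmem n).1).lt_of_ne' (htmem n).2
  have hE0 : ∀ ε > 0, (E ∩ Ioo 0 ε).Nonempty := fun ε hε =>
    let ⟨n, hn⟩ := (ht0.eventually_lt_const hε).exists
    ⟨t n, (htmem n).1, htpos n, hn⟩
  have hlpos : ∀ k, 0 < l k := fun k => (hlm.1 k).left_pos hE0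
  have hl0 := hlm.2.2.1
  set g : ℕ → ℕ := fun n => lastIndexGe l (t n)
  have hg : Tendsto g atTop atTop := tendsto_atTop.2 fun K =>
    (ht0.eventually_lt_const (hlpos K)).mono fun n hn => le_lastIndexGe hl0 (htpos n) hn.le
  have hgmono : ∀ᶠ n in atTop, g n ≤ g (n + 1) :=
    htdec.mono fun n hn => lastIndexGe_anti hl0 (htpos _) hn
  have hle : ∀ᶠ n in atTop, t n ≤ l (g n) :=
    (ht0.eventually_lt_const (hlpos 0)).mono fun n hn =>
      le_apply_lastIndexGe hl0 (htpos n) hn.le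
  have hm_le : ∀ n, m (g n + 1) ≤ t n := fun n =>
    (hlm.1 _).right_le_of_mem (htmem n).1 (apply_lastIndexGe_succ_lt hl0 (htpos n))
  calc Ctau E t ≤ limsup (fun n => ENNReal.ofReal (l (g n) / t n)) atTop :=
        sInf_le ⟨_, _, hlm.comp hg hgmono, hle, rfl⟩
    _ ≤ limsup ((fun j => ENNReal.ofReal (l j / m (j + 1))) ∘ g) atTop :=
        limsup_le_limsup (Eventually.of_forall fun n => ENNReal.ofReal_le_ofReal <|
          div_le_div_of_nonneg_left (hlm.1 _).1 (hlm.1 _).right_pos (hm_le n))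
    _ ≤ Mlim l m := hg.limsup_comp_le_limsup

lemma exists_memE0d_ge_tendsto_div_one {E : Set ℝ} {s : ℕ → ℝ} (hpos : ∀ n, 0 < s n)
    (hdec : AlmostDecreasing s) (hs0 : Tendsto s atTop (𝓝 0))
    (happrox : ∀ n, ∀ ε > 0, ∃ e ∈ E, s n ≤ e ∧ e < s n + ε) :
    ∃ τ, MemE0d E τ ∧ (∀ᶠ n in atTop, s n ≤ τ n) ∧
      Tendsto (fun n => τ n / s n) atTop (𝓝 1) := by
  choose e heE hse hes using fun n : ℕ => happrox n (s n / (n + 1)) (by have := hpos n; positivity)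
  obtain ⟨N, hN⟩ := hdec.exists_antitoneOn
  -- running minimum of `e` from the index `N` on which `s` is antitone (`τ n = e n` for `n < N`)
  set τ : ℕ → ℝ := fun n =>
    (Finset.Icc (min N n) n).inf' (Finset.nonempty_Icc.2 (min_le_right N n)) e
  have hτ_eq : ∀ n, ∃ k, τ n = e k := fun n =>
    (Finset.exists_mem_eq_inf' _ e).imp fun _ hk => hk.2
  have hτ_le : ∀ n, τ n ≤ e n := fun n =>
    Finset.inf'_le e (Finset.mem_Icc.2 ⟨min_le_right N n, le_rfl⟩)
  have hτ_pos : ∀ n, 0 < τ n := fun n => by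
    obtain ⟨k, hk⟩ := hτ_eq n
    exact hk ▸ (hpos k).trans_le (hse k)
  have hs_le : ∀ n ≥ N, s n ≤ τ n := fun n hn => Finset.le_inf' _ _ fun k hk => by
    rw [Finset.mem_Icc, min_eq_left hn] at hk
    exact (hN (mem_Ici.2 hk.1) (mem_Ici.2 hn) hk.2).trans (hse k)
  have hτ_anti : ∀ n ≥ N, τ (n + 1) ≤ τ n := fun n hn => by
    refine Finset.inf'_mono e (Finset.Icc_subset_Icc ?_ n.le_succ) _
    rw [min_eq_left hn, min_eq_left (hn.trans n.le_succ)]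
  have hratio : Tendsto (fun n => τ n / s n) atTop (𝓝 1) := by
    have hupper : Tendsto (fun n : ℕ => 1 + 1 / ((n : ℝ) + 1)) atTop (𝓝 1) := by
      simpa using tendsto_const_nhds.add (tendsto_one_div_add_atTop_nhds_zero_nat (𝕜 := ℝ))
    refine tendsto_of_tendsto_of_tendsto_of_le_of_le' tendsto_const_nhds hupper ?_ ?_
    · filter_upwards [eventually_ge_atTop N] with n hn
      exact (one_le_div (hpos n)).2 (hs_le n hn)
    · refine Eventually.of_forall fun n => (div_le_iff₀ (hpos n)).2 ?_
      have := hes n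
      have := hτ_le n
      rw [add_mul, one_mul, one_div_mul_eq_div]
      linarith
  refine ⟨τ, ⟨eventually_atTop.2 ⟨N, hτ_anti⟩, fun n => ?_, ?_⟩,
    eventually_atTop.2 ⟨N, hs_le⟩, hratio⟩
  · obtain ⟨k, hk⟩ := hτ_eq n
    exact ⟨hk ▸ heE k, (hτ_pos n).ne'⟩
  · simpa using (hratio.mul hs0).congr fun n => div_mul_cancel₀ (τ n) (hpos n).ne'

lemma Mlim_le_Ctau {E : Set ℝ} {l m τ : ℕ → ℝ} (hlm : IsUniversal E l m)
    (hlpos : ∀ n, 0 < l n) (hmτ : ∀ᶠ n in atTop, m (n + 1) ≤ τ n)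
    (hratio : Tendsto (fun n => τ n / m (n + 1)) atTop (𝓝 1)) : Mlim l m ≤ Ctau E τ := by
  obtain ⟨⟨hgap, hldec, hl0, -⟩, huniv⟩ := hlm
  refine le_sInf ?_
  rintro _ ⟨a, b, hab, hτa, rfl⟩
  obtain ⟨N, f, hf⟩ := huniv a b hab
  have hbound : ∀ᶠ n in atTop, ENNReal.ofReal (l n / m (n + 1)) ≤
      ENNReal.ofReal (a n / τ n) * ENNReal.ofReal (τ n / m (n + 1)) := by
    filter_upwards [hldec.eventually_le_of_succ_lt hlpos hl0, hmτ, hτa, eventually_ge_atTop N]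
      with n hsucc hmτn hτan hNn
    have hτpos : 0 < τ n := (hgap (n + 1)).right_pos.trans_le hmτn
    have hla : l n ≤ a n := by
      rw [hf n hNn] at hτan ⊢
      exact hsucc _ ((hgap (n + 1)).2.1.trans_le (hmτn.trans hτan))
    rw [← ENNReal.ofReal_mul (div_nonneg ((hgap n).1.trans hla) hτpos.le),
      div_mul_div_cancel₀ hτpos.ne']
    exact ENNReal.ofReal_le_ofReal (div_le_div_of_nonneg_right hla (hgap (n + 1)).right_pos.le)
  have hlim : limsup (fun n => ENNReal.ofReal (τ n / m (n + 1))) atTop = 1 := by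
    simpa using (ENNReal.tendsto_ofReal hratio).limsup_eq
  calc Mlim l m ≤ limsup (fun n => ENNReal.ofReal (a n / τ n) *
        ENNReal.ofReal (τ n / m (n + 1))) atTop := limsup_le_limsup hbound
    _ ≤ limsup (fun n => ENNReal.ofReal (a n / τ n)) atTop * 1 := by
        rw [← hlim]
        exact ENNReal.limsup_mul_le' (Or.inr (by simp [hlim])) (Or.inr (by simp [hlim]))
    _ = _ := mul_one _

lemma Mlim_le_Ctot {E : Set ℝ} {l m : ℕ → ℝ} (hlm : IsUniversal E l m) : Mlim l m ≤ Ctot E := by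
  have hmem := hlm.1
  by_cases hE0 : ∀ ε > 0, (E ∩ Ioo 0 ε).Nonempty
  · have hmdec : AlmostDecreasing fun n => m (n + 1) :=
      (tendsto_add_atTop_nat 1).eventually hmem.almostDecreasing_right
    obtain ⟨τ, hτ, hmτ, hratio⟩ := exists_memE0d_ge_tendsto_div_one
      (fun n => (hmem.1 (n + 1)).right_pos) hmdec
      ((hmem.tendsto_right hE0).comp (tendsto_add_atTop_nat 1))
      (fun n _ hε => (hmem.1 (n + 1)).exists_mem_near_right hε)
    calc Mlim l m ≤ Ctau E τ :=
          Mlim_le_Ctau hlm (fun n => (hmem.1 n).left_pos hE0) hmτ hratio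
      _ ≤ Ctot E := le_iSup₂ (f := fun t (_ : t ∈ {t | MemE0d E t}) => Ctau E t) τ hτ
  · push Not at hE0
    obtain ⟨ε, hε, hEε⟩ := hE0
    have hzero : ∀ᶠ n in atTop, ENNReal.ofReal (l n / m (n + 1)) = 0 :=
      (hmem.eventually_left_eq_zero hε hEε).mono fun n hn => by simp [hn]
    rw [Mlim, limsup_congr hzero, limsup_const]
    exact zero_le

theorem stmt19_general (E : Set ℝ) (hE : E ⊆ Ici 0)
    (l m : ℕ → ℝ) (hlm : IsUniversal E l m) : Mlim l m = Ctot E :=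
  le_antisymm (Mlim_le_Ctot hlm) (iSup₂_le fun _ ht => Ctau_le_Mlim hE hlm.1 ht)

/-- Lemma 2.12, `M(L̃) = C_E` for universal `L̃`. -/
theorem stmt19 (E : Set ℝ) (hE : E ⊆ Ici 0) (hcsp : CSP E)
    (l m : ℕ → ℝ) (hlm : IsUniversal E l m) : Mlim l m = Ctot E :=
  stmt19_general E hE l m hlm
end
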